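/- Orthogonality of the optimal storing and forwarding strategies: for every deferral rate φ with 0 ≤ φ ≤ φ_crit and φ < 1, any feasible pair (s,r) that attains the maximum in the privacy–deferral function P(φ) satisfies s_k · r_k = 0 for every k ∈ {1,…,n}. -/

import Mathlib

/-!
STATEMENT 5. Orthogonality of the optimal storing and forwarding strategies:
for every deferral rate `φ` with `0 ≤ φ ≤ φ_crit` and `φ < 1`, any feasible pair
`(s,r)` attaining the maximum in the privacy–deferral function `P(φ)` satisfies
`sₖ · rₖ = 0` for every `k`.
-/

/-- Base-2 Shannon entropy `H(t) = -∑ tᵢ log₂ tᵢ` (with `0·log₂ 0 = 0`). -/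
noncomputable def shannon {n : ℕ} (t : Fin n → ℝ) : ℝ :=
  -∑ i, t i * Real.logb 2 (t i)

/-- A pair `(s,r)` is feasible for actual profile `q` and deferral rate `φ`. -/
def Feasible {n : ℕ} (q : Fin n → ℝ) (φ : ℝ) (s r : Fin n → ℝ) : Prop :=
  (∀ i, 0 ≤ s i) ∧ (∀ i, 0 ≤ r i) ∧ (∀ i, 0 ≤ q i - s i + r i) ∧
    (∑ i, s i = φ) ∧ (∑ i, r i = φ)

/-- Total variation distance `TV(p‖q) = ½ ∑ |pᵢ - qᵢ|`. -/
noncomputable def tvDist {n : ℕ} (p q : Fin n → ℝ) : ℝ :=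
  (1 / 2) * ∑ i, |p i - q i|

/-! If `s k * r k ≠ 0`, the apparent profile `t = q - s + r` satisfies
`TV(t, q) = φ - ∑ min (sᵢ, rᵢ) < φ`, so part of the deferral budget is wasted, and `t ≠ u`
because `φ ≤ TV(u, q)`. Moving `t` slightly towards `u` keeps `TV(·, q) ≤ φ` (TV is convex in its
first argument and at most `1`), so the new profile is still reachable with rate `φ`, while strict
concavity of `x ↦ -x log x` together with `H(t) ≤ H(u)` makes its entropy strictly larger. -/

open Finset Real

section TotalVariation

variable {n : ℕ}

lemma tvDist_comm (p q : Fin n → ℝ) : tvDist p q = tvDist q p := by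
  simp only [tvDist, abs_sub_comm]

lemma tvDist_nonneg (p q : Fin n → ℝ) : 0 ≤ tvDist p q := by
  unfold tvDist; positivity

lemma tvDist_le_one {p q : Fin n → ℝ} (hp0 : ∀ i, 0 ≤ p i) (hq0 : ∀ i, 0 ≤ q i)
    (hp1 : ∑ i, p i = 1) (hq1 : ∑ i, q i = 1) : tvDist p q ≤ 1 := by
  have : ∑ i, |p i - q i| ≤ ∑ i, (p i + q i) :=
    sum_le_sum fun i _ => abs_sub_le_iff.2 ⟨by linarith [hq0 i], by linarith [hp0 i]⟩
  rw [sum_add_distrib, hp1, hq1] at this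
  rw [tvDist]; linarith

lemma tvDist_eq_sum_posPart {p q : Fin n → ℝ} (h : ∑ i, p i = ∑ i, q i) :
    tvDist p q = ∑ i, (p i - q i)⁺ := by
  have hsub : ∑ i, ((p i - q i)⁺ - (p i - q i)⁻) = 0 := by
    simp only [posPart_sub_negPart, sum_sub_distrib, h, sub_self]
  have habs : ∑ i, |p i - q i| = ∑ i, ((p i - q i)⁺ + (p i - q i)⁻) := by
    simp only [posPart_add_negPart]
  rw [sum_sub_distrib] at hsub
  rw [tvDist, habs, sum_add_distrib]
  linarith

lemma tvDist_convexComb_le {p p' q : Fin n → ℝ} {a b : ℝ} (ha : 0 ≤ a) (hb : 0 ≤ b)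
    (hab : a + b = 1) :
    tvDist (fun i => a * p i + b * p' i) q ≤ a * tvDist p q + b * tvDist p' q := by
  have hterm (i : Fin n) : |a * p i + b * p' i - q i| ≤ a * |p i - q i| + b * |p' i - q i| := by
    calc |a * p i + b * p' i - q i| = |a * (p i - q i) + b * (p' i - q i)| := by
          congr 1; linear_combination q i * hab
      _ ≤ |a * (p i - q i)| + |b * (p' i - q i)| := abs_add_le _ _
      _ = a * |p i - q i| + b * |p' i - q i| := by
          rw [abs_mul, abs_mul, abs_of_nonneg ha, abs_of_nonneg hb]
  have hsum := sum_le_sum fun i (_ : i ∈ univ) => hterm i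
  rw [sum_add_distrib, ← mul_sum, ← mul_sum] at hsum
  simp only [tvDist]
  linarith

end TotalVariation

section Feasible

variable {n : ℕ} {q s r : Fin n → ℝ} {φ : ℝ}

lemma Feasible.sum_apparent (h : Feasible q φ s r) :
    ∑ i, (q i - s i + r i) = ∑ i, q i := by
  rw [sum_add_distrib, sum_sub_distrib, h.2.2.2.1, h.2.2.2.2, sub_add_cancel]

lemma Feasible.tvDist_apparent (h : Feasible q φ s r) :
    tvDist (fun i => q i - s i + r i) q = φ - ∑ i, min (s i) (r i) := by
  rw [tvDist_eq_sum_posPart h.sum_apparent, ← h.2.2.2.2, ← sum_sub_distrib]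
  refine sum_congr rfl fun i _ => ?_
  rw [← max_sub_sub_left, sub_self, show q i - s i + r i - q i = r i - s i by ring]
  rfl

lemma exists_feasible_apparent_eq (hn : 0 < n) {t : Fin n → ℝ} (ht0 : ∀ i, 0 ≤ t i)
    (hsum : ∑ i, t i = ∑ i, q i) (hφ : tvDist t q ≤ φ) :
    ∃ s r, Feasible q φ s r ∧ (fun i => q i - s i + r i) = t := by
  set slack : Fin n → ℝ := Pi.single ⟨0, hn⟩ (φ - tvDist t q)
  have hslack (i : Fin n) : 0 ≤ slack i := by
    simp only [slack, Pi.single_apply]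
    split_ifs <;> linarith
  have happ : ∀ i, q i - ((q i - t i)⁺ + slack i) + ((t i - q i)⁺ + slack i) = t i := by
    intro i
    rw [← neg_sub (q i) (t i), posPart_neg]
    linarith [posPart_sub_negPart (q i - t i)]
  refine ⟨fun i => (q i - t i)⁺ + slack i, fun i => (t i - q i)⁺ + slack i,
    ⟨fun i => add_nonneg (posPart_nonneg _) (hslack i),
      fun i => add_nonneg (posPart_nonneg _) (hslack i), fun i => (happ i).symm ▸ ht0 i, ?_, ?_⟩,
    funext happ⟩
  · rw [sum_add_distrib, ← tvDist_eq_sum_posPart hsum.symm, tvDist_comm, sum_pi_single',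
      if_pos (mem_univ _)]
    ring
  · rw [sum_add_distrib, ← tvDist_eq_sum_posPart hsum, sum_pi_single', if_pos (mem_univ _)]
    ring

end Feasible

section Entropy

variable {ι : Type*} [Fintype ι] [Nonempty ι]

lemma sum_negMulLog_uniform :
    ∑ _i : ι, negMulLog (1 / (Fintype.card ι : ℝ)) = log (Fintype.card ι) := by
  have hN : (Fintype.card ι : ℝ) ≠ 0 := Nat.cast_ne_zero.2 Fintype.card_ne_zero
  simp only [sum_const, card_univ, nsmul_eq_mul, negMulLog, one_div, log_inv]
  field_simp

lemma sum_negMulLog_le_log_card {t : ι → ℝ} (ht0 : ∀ i, 0 ≤ t i) (ht1 : ∑ i, t i = 1) :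
    ∑ i, negMulLog (t i) ≤ log (Fintype.card ι) := by
  have hN : (0 : ℝ) < Fintype.card ι := Nat.cast_pos.2 Fintype.card_pos
  have hJensen := concaveOn_negMulLog.le_map_sum (t := univ) (p := t)
    (w := fun _ => 1 / (Fintype.card ι : ℝ)) (fun _ _ => by positivity)
    (by simp [card_univ, hN.ne']) (fun i _ => ht0 i)
  simp only [smul_eq_mul, ← mul_sum, ht1, mul_one] at hJensen
  rw [← sum_negMulLog_uniform, sum_const, card_univ, nsmul_eq_mul]
  have := mul_le_mul_of_nonneg_left hJensen hN.le
  rwa [← mul_assoc, mul_one_div_cancel hN.ne', one_mul] at this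

lemma sum_negMulLog_lt_sum_negMulLog_mix_uniform {t : ι → ℝ} (ht0 : ∀ i, 0 ≤ t i)
    (ht1 : ∑ i, t i = 1) (htu : t ≠ fun _ => 1 / (Fintype.card ι : ℝ)) {l : ℝ} (hl0 : 0 < l)
    (hl1 : l < 1) :
    ∑ i, negMulLog (t i) < ∑ i, negMulLog ((1 - l) * t i + l * (1 / Fintype.card ι)) := by
  set u : ℝ := 1 / Fintype.card ι
  have hu : 0 ≤ u := by positivity
  obtain ⟨i₀, hi₀⟩ := Function.ne_iff.1 htu
  have hconc : (1 - l) * ∑ i, negMulLog (t i) + l * log (Fintype.card ι) <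
      ∑ i, negMulLog ((1 - l) * t i + l * u) := by
    rw [← sum_negMulLog_uniform, mul_sum, mul_sum, ← sum_add_distrib]
    refine sum_lt_sum (fun i _ => ?_) ⟨i₀, mem_univ _, ?_⟩
    · exact concaveOn_negMulLog.2 (ht0 i) hu (by linarith) hl0.le (by ring)
    · exact strictConcaveOn_negMulLog.2 (ht0 i₀) hu hi₀ (by linarith) hl0 (by ring)
  nlinarith [sum_negMulLog_le_log_card ht0 ht1]

end Entropy

section Improvement

variable {n : ℕ}

lemma shannon_eq_sum_negMulLog_div (t : Fin n → ℝ) :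
    shannon t = (∑ i, negMulLog (t i)) / log 2 := by
  simp only [shannon, logb, negMulLog, sum_div, ← sum_neg_distrib]
  exact sum_congr rfl fun i _ => by ring

lemma exists_shannon_gt_of_tvDist_lt (hn : 0 < n) {q t : Fin n → ℝ} (hq0 : ∀ i, 0 ≤ q i)
    (hq1 : ∑ i, q i = 1) (ht0 : ∀ i, 0 ≤ t i) (ht1 : ∑ i, t i = 1)
    (htu : t ≠ fun _ => 1 / (n : ℝ)) {φ : ℝ} (hφ : tvDist t q < φ) :
    ∃ t' : Fin n → ℝ, (∀ i, 0 ≤ t' i) ∧ ∑ i, t' i = 1 ∧ tvDist t' q ≤ φ ∧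
      shannon t < shannon t' := by
  have : Nonempty (Fin n) := ⟨⟨0, hn⟩⟩
  set ε := φ - tvDist t q
  have hε : 0 < ε := sub_pos.2 hφ
  set l := ε / (1 + ε)
  have hl0 : 0 < l := by positivity
  have hl1 : l < 1 := (div_lt_one (by positivity)).2 (by linarith)
  have hlε : (1 - l) * ε = l := by simp only [l]; field_simp; ring
  set u : Fin n → ℝ := fun _ => 1 / (n : ℝ)
  have hu0 : ∀ i, 0 ≤ u i := fun _ => by positivity
  have hu1 : ∑ i, u i = 1 := by simp [u, hn.ne']
  refine ⟨fun i => (1 - l) * t i + l * u i, fun i => by nlinarith [ht0 i, hu0 i], ?_, ?_, ?_⟩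
  · rw [sum_add_distrib, ← mul_sum, ← mul_sum, ht1, hu1]; ring
  · calc tvDist (fun i => (1 - l) * t i + l * u i) q
        ≤ (1 - l) * tvDist t q + l * tvDist u q :=
          tvDist_convexComb_le (by linarith) hl0.le (by ring)
      _ ≤ (1 - l) * (φ - ε) + l * 1 := by
          gcongr
          · linarith
          · exact tvDist_le_one hu0 hq0 hu1 hq1
      _ = (1 - l) * φ := by linear_combination -hlε
      _ ≤ φ := mul_le_of_le_one_left ((tvDist_nonneg t q).trans hφ.le) (by linarith)
  · have hlog2 : 0 < log 2 := log_pos one_lt_two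
    rw [shannon_eq_sum_negMulLog_div, shannon_eq_sum_negMulLog_div]
    refine div_lt_div_of_pos_right ?_ hlog2
    simpa only [Fintype.card_fin] using
      sum_negMulLog_lt_sum_negMulLog_mix_uniform ht0 ht1 (by rwa [Fintype.card_fin]) hl0 hl1

end Improvement

theorem optimal_strategies_orthogonal_general {n : ℕ}
    (q : Fin n → ℝ) (hq0 : ∀ i, 0 ≤ q i) (hq1 : ∑ i, q i = 1)
    (φ : ℝ) (hφcrit : φ ≤ tvDist (fun _ => 1 / (n : ℝ)) q)
    (s r : Fin n → ℝ) (hfeas : Feasible q φ s r)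
    (hopt : ∀ s' r', Feasible q φ s' r' →
      shannon (fun i => q i - s' i + r' i) ≤ shannon (fun i => q i - s i + r i)) :
    ∀ k, s k * r k = 0 := by
  intro k
  by_contra hk
  have hn : 0 < n := k.pos
  have ⟨hs0, hr0, ht0, _, _⟩ := hfeas
  set t := fun i => q i - s i + r i
  have ht1 : ∑ i, t i = 1 := hfeas.sum_apparent.trans hq1
  have hmin : 0 < min (s k) (r k) :=
    lt_min ((hs0 k).lt_of_ne' (left_ne_zero_of_mul hk))
      ((hr0 k).lt_of_ne' (right_ne_zero_of_mul hk))
  have htv : tvDist t q < φ := by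
    have := single_le_sum (fun i _ => le_min (hs0 i) (hr0 i)) (mem_univ k)
    rw [hfeas.tvDist_apparent]
    linarith
  have htu : t ≠ fun _ => 1 / (n : ℝ) := fun h => by rw [h] at htv; linarith
  obtain ⟨t', ht'0, ht'1, ht'q, hlt⟩ :=
    exists_shannon_gt_of_tvDist_lt hn hq0 hq1 ht0 ht1 htu htv
  obtain ⟨s', r', hfeas', rfl⟩ := exists_feasible_apparent_eq hn ht'0 (ht'1.trans hq1.symm) ht'q
  exact (hopt s' r' hfeas').not_gt hlt

theorem optimal_strategies_orthogonal {n : ℕ} (hn : 2 ≤ n)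
    (q : Fin n → ℝ) (hq0 : ∀ i, 0 ≤ q i) (hq1 : ∑ i, q i = 1)
    (φ : ℝ) (hφ0 : 0 ≤ φ) (hφcrit : φ ≤ tvDist (fun _ => 1 / (n : ℝ)) q)
    (hφ1 : φ < 1) (s r : Fin n → ℝ) (hfeas : Feasible q φ s r)
    (hopt : ∀ s' r', Feasible q φ s' r' →
      shannon (fun i => q i - s' i + r' i) ≤ shannon (fun i => q i - s i + r i)) :
    ∀ k, s k * r k = 0 :=
  optimal_strategies_orthogonal_general q hq0 hq1 φ hφcrit s r hfeas hopt
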